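/- arXiv:2106.07231 — 2 statements merged into one kernel-verified Lean document; each statement's English description precedes it below -/
import Mathlib

section
/- The centralizer C_G(G') of the derived subgroup G' in G equals the subgroup generated by z, x² and xy, and this subgroup is abelian. -/
/-!
The generator `z` is inverted by `x` and `y`, so `⟨z⟩` is normal, and `G/⟨z⟩` is generated by the
commuting images of `x` and `y`; hence `G' = ⟨z⟩` and `C_G(G') = C_G(z)`. The generators
`z, x², xy` of `S` pairwise commute. Since `x² ∈ S`, `x⁻¹ S x ⊆ S` and `x⁻¹y ∈ S`, every element of
`G = ⟨x, y⟩` lies in `S ∪ xS`. An element of `xS` centralising `z` would force `x` to centralise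
`z`, i.e. `z = z⁻¹`; this fails because `x ↦ sr 0`, `y ↦ sr 1` maps `G` to the dihedral group of
order 16 and `z` to the rotation `r 6` of order 4.
-/
namespace MIP

/-- Relators of the group `G`. -/
def grels (n m : ℕ) : Set (FreeGroup (Fin 3)) :=
  {(FreeGroup.of 2)⁻¹ * ((FreeGroup.of 1)⁻¹ * (FreeGroup.of 0)⁻¹ * FreeGroup.of 1 * FreeGroup.of 0),
   FreeGroup.of 0 ^ (2 ^ n), FreeGroup.of 1 ^ (2 ^ m), FreeGroup.of 2 ^ 4,
   (FreeGroup.of 0)⁻¹ * FreeGroup.of 2 * FreeGroup.of 0 * FreeGroup.of 2,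
   (FreeGroup.of 1)⁻¹ * FreeGroup.of 2 * FreeGroup.of 1 * FreeGroup.of 2}

/-- Relators of the group `H`. -/
def hrels (n m : ℕ) : Set (FreeGroup (Fin 3)) :=
  {(FreeGroup.of 2)⁻¹ * ((FreeGroup.of 1)⁻¹ * (FreeGroup.of 0)⁻¹ * FreeGroup.of 1 * FreeGroup.of 0),
   FreeGroup.of 0 ^ (2 ^ n), FreeGroup.of 1 ^ (2 ^ m), FreeGroup.of 2 ^ 4,
   (FreeGroup.of 0)⁻¹ * FreeGroup.of 2 * FreeGroup.of 0 * FreeGroup.of 2,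
   (FreeGroup.of 1)⁻¹ * FreeGroup.of 2 * FreeGroup.of 1 * (FreeGroup.of 2)⁻¹}

abbrev GG (n m : ℕ) := PresentedGroup (grels n m)
abbrev HH (n m : ℕ) := PresentedGroup (hrels n m)

def gx (n m : ℕ) : GG n m := PresentedGroup.of 0
def gy (n m : ℕ) : GG n m := PresentedGroup.of 1
def gz (n m : ℕ) : GG n m := PresentedGroup.of 2
def ha (n m : ℕ) : HH n m := PresentedGroup.of 0
def hb (n m : ℕ) : HH n m := PresentedGroup.of 1
def hc (n m : ℕ) : HH n m := PresentedGroup.of 2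

open Subgroup

section Group

variable {G : Type*} [Group G]

theorem isMulCommutative_of_closure_pair_eq_top {a b : G} (h : closure {a, b} = ⊤)
    (hab : Commute a b) : IsMulCommutative G := by
  have hcomm : IsMulCommutative (closure {a, b}) := isMulCommutative_closure <| by
    simp only [Set.mem_insert_iff, Set.mem_singleton_iff]
    rintro _ (rfl | rfl) _ (rfl | rfl)
    exacts [rfl, hab.eq, hab.eq.symm, rfl]
  exact ⟨⟨fun g k => congrArg Subtype.val
    (hcomm.is_comm.comm ⟨g, h ▸ mem_top g⟩ ⟨k, h ▸ mem_top k⟩)⟩⟩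

theorem mem_normalizer_zpowers_of_inv_mul_mul_eq_inv {a z : G} (h : a⁻¹ * z * a = z⁻¹) :
    a ∈ normalizer (zpowers z : Set G) := by
  rw [← inv_mem_iff, mem_normalizer_iff_map_conj_eq, MonoidHom.map_zpowers]
  simp [h]

theorem commute_mul_of_inv_mul_mul_eq_inv {a b z : G} (ha : a⁻¹ * z * a = z⁻¹)
    (hb : b⁻¹ * z * b = z⁻¹) : Commute z (a * b) :=
  calc z * (a * b) = a * (a⁻¹ * z * a) * b := by group
    _ = a * b * (b⁻¹ * z * b)⁻¹ := by rw [ha]; group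
    _ = a * b * z := by rw [hb, inv_inv]

theorem commute_sq_of_mul_eq_mul_mul {a b z : G} (hba : b * a = a * b * z)
    (ha : a⁻¹ * z * a = z⁻¹) : Commute (a ^ 2) b := by
  have hb : a⁻¹ * b * a = b * z := by rw [mul_assoc, hba]; group
  have hb2 : (a ^ 2)⁻¹ * b * a ^ 2 = b :=
    calc (a ^ 2)⁻¹ * b * a ^ 2 = a⁻¹ * (a⁻¹ * b * a) * a := by rw [sq]; group
      _ = a⁻¹ * (b * z) * a := by rw [hb]
      _ = (a⁻¹ * b * a) * (a⁻¹ * z * a) := by group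
      _ = b := by rw [hb, ha]; group
  calc a ^ 2 * b = a ^ 2 * ((a ^ 2)⁻¹ * b * a ^ 2) := by rw [hb2]
    _ = b * a ^ 2 := by group

theorem inv_mul_mul_mem_closure {T : Set G} {a : G} (hT : ∀ t ∈ T, a⁻¹ * t * a ∈ closure T)
    {s : G} (hs : s ∈ closure T) : a⁻¹ * s * a ∈ closure T := by
  induction hs using closure_induction with
  | mem t ht => exact hT t ht
  | one => simp
  | mul g k _ _ hg hk => simpa [mul_assoc] using mul_mem hg hk
  | inv g _ hg => simpa [mul_assoc] using inv_mem hg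

/-- `S ∪ aS` is a subgroup when `a² ∈ S` and `a⁻¹ S a ⊆ S`. -/
theorem mem_or_inv_mul_mem_of_mem_closure {S : Subgroup G} {a : G} {T : Set G}
    (ha : a ^ 2 ∈ S) (hS : ∀ s ∈ S, a⁻¹ * s * a ∈ S) (hT : ∀ t ∈ T, t ∈ S ∨ a⁻¹ * t ∈ S)
    {g : G} (hg : g ∈ closure T) : g ∈ S ∨ a⁻¹ * g ∈ S := by
  induction hg using closure_induction with
  | mem t ht => exact hT t ht
  | one => exact .inl S.one_mem
  | mul g k _ _ hg hk =>
    rcases hg with hg | hg <;> rcases hk with hk | hk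
    · exact .inl (mul_mem hg hk)
    · refine .inr ?_
      simpa [mul_assoc] using mul_mem (hS g hg) hk
    · refine .inr ?_
      simpa [mul_assoc] using mul_mem hg hk
    · refine .inl ?_
      convert mul_mem (mul_mem ha (hS _ hg)) hk using 1
      group
  | inv g _ hg =>
    rcases hg with hg | hg
    · exact .inl (inv_mem hg)
    · refine .inr ?_
      convert mul_mem (hS _ (inv_mem hg)) (inv_mem ha) using 1
      group

end Group

section Presentation

variable {n m : ℕ}

theorem gz_eq : gz n m = (gy n m)⁻¹ * (gx n m)⁻¹ * gy n m * gx n m := by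
  have h := PresentedGroup.one_of_mem (rels := grels n m)
    (x := (FreeGroup.of 2)⁻¹ * ((FreeGroup.of 1)⁻¹ * (FreeGroup.of 0)⁻¹ * FreeGroup.of 1 *
      FreeGroup.of 0)) (by simp [grels])
  simp only [map_mul, map_inv] at h
  exact inv_mul_eq_one.mp h

theorem gx_inv_mul_gz_mul_gx : (gx n m)⁻¹ * gz n m * gx n m = (gz n m)⁻¹ := by
  have h := PresentedGroup.one_of_mem (rels := grels n m)
    (x := (FreeGroup.of 0)⁻¹ * FreeGroup.of 2 * FreeGroup.of 0 * FreeGroup.of 2) (by simp [grels])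
  simp only [map_mul, map_inv] at h
  exact eq_inv_of_mul_eq_one_left h

theorem gy_inv_mul_gz_mul_gy : (gy n m)⁻¹ * gz n m * gy n m = (gz n m)⁻¹ := by
  have h := PresentedGroup.one_of_mem (rels := grels n m)
    (x := (FreeGroup.of 1)⁻¹ * FreeGroup.of 2 * FreeGroup.of 1 * FreeGroup.of 2) (by simp [grels])
  simp only [map_mul, map_inv] at h
  exact eq_inv_of_mul_eq_one_left h

theorem gy_mul_gx : gy n m * gx n m = gx n m * gy n m * gz n m := by
  rw [gz_eq]; group

open commutatorElement in
theorem gz_mem_commutator : gz n m ∈ commutator (GG n m) := by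
  have h : gz n m = ⁅(gy n m)⁻¹, (gx n m)⁻¹⁆ := by
    rw [commutatorElement_def, inv_inv, inv_inv, gz_eq]
  rw [h, _root_.commutator_def]
  exact commutator_mem_commutator (mem_top _) (mem_top _)

theorem closure_gx_gy : closure {gx n m, gy n m} = ⊤ := by
  have hx : gx n m ∈ closure {gx n m, gy n m} := subset_closure (by simp)
  have hy : gy n m ∈ closure {gx n m, gy n m} := subset_closure (by simp)
  rw [eq_top_iff, ← PresentedGroup.closure_range_of, closure_le]
  rintro _ ⟨i, rfl⟩
  fin_cases i
  · exact hx
  · exact hy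
  · change gz n m ∈ _
    rw [gz_eq]
    exact mul_mem (mul_mem (mul_mem (inv_mem hy) (inv_mem hx)) hy) hx

instance zpowers_gz_normal : (zpowers (gz n m)).Normal := by
  rw [← normalizer_eq_top_iff, eq_top_iff, ← closure_gx_gy, closure_le]
  rintro _ (rfl | rfl)
  · exact mem_normalizer_zpowers_of_inv_mul_mul_eq_inv gx_inv_mul_gz_mul_gx
  · exact mem_normalizer_zpowers_of_inv_mul_mul_eq_inv gy_inv_mul_gz_mul_gy

theorem commutator_eq_zpowers_gz : commutator (GG n m) = zpowers (gz n m) := by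
  refine le_antisymm ?_ (zpowers_le.mpr gz_mem_commutator)
  rw [← Normal.quotient_commutative_iff_commutator_le]
  let π := QuotientGroup.mk' (zpowers (gz n m))
  refine isMulCommutative_of_closure_pair_eq_top (a := π (gx n m)) (b := π (gy n m)) ?_ ?_
  · rw [← Set.image_pair, ← MonoidHom.map_closure, closure_gx_gy, ← MonoidHom.range_eq_map,
      MonoidHom.range_eq_top]
    exact QuotientGroup.mk'_surjective _
  · have hz : π (gz n m) = 1 := (QuotientGroup.eq_one_iff _).mpr (mem_zpowers _)
    rw [Commute, SemiconjBy, ← map_mul, ← map_mul, gy_mul_gx, map_mul π _ (gz n m), hz, mul_one]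

/-- The elements of even length in `x` and `y`. -/
def evenSubgroup (n m : ℕ) : Subgroup (GG n m) :=
  closure {gz n m, gx n m ^ 2, gx n m * gy n m}

theorem gx_sq_mem_evenSubgroup : gx n m ^ 2 ∈ evenSubgroup n m := subset_closure (by simp)

theorem commute_gz_gx_sq : Commute (gz n m) (gx n m ^ 2) := by
  rw [sq]; exact commute_mul_of_inv_mul_mul_eq_inv gx_inv_mul_gz_mul_gx gx_inv_mul_gz_mul_gx

theorem commute_gz_gx_mul_gy : Commute (gz n m) (gx n m * gy n m) :=
  commute_mul_of_inv_mul_mul_eq_inv gx_inv_mul_gz_mul_gx gy_inv_mul_gz_mul_gy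

theorem commute_gx_sq_gx_mul_gy : Commute (gx n m ^ 2) (gx n m * gy n m) :=
  ((Commute.refl (gx n m)).pow_left 2).mul_right
    (commute_sq_of_mul_eq_mul_mul gy_mul_gx gx_inv_mul_gz_mul_gx)

theorem isMulCommutative_evenSubgroup : IsMulCommutative (evenSubgroup n m) := by
  refine isMulCommutative_closure ?_
  simp only [Set.mem_insert_iff, Set.mem_singleton_iff]
  rintro _ (rfl | rfl | rfl) _ (rfl | rfl | rfl)
  exacts [rfl, commute_gz_gx_sq, commute_gz_gx_mul_gy, commute_gz_gx_sq.symm, rfl,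
    commute_gx_sq_gx_mul_gy, commute_gz_gx_mul_gy.symm, commute_gx_sq_gx_mul_gy.symm, rfl]

theorem evenSubgroup_le_centralizer_gz : evenSubgroup n m ≤ centralizer {gz n m} := by
  rw [evenSubgroup, closure_le]
  rintro _ (rfl | rfl | rfl) <;> refine mem_centralizer_singleton_iff.mpr ?_
  exacts [rfl, commute_gz_gx_sq.eq.symm, commute_gz_gx_mul_gy.eq.symm]

theorem gx_inv_mul_mul_gx_mem_evenSubgroup {s : GG n m} (hs : s ∈ evenSubgroup n m) :
    (gx n m)⁻¹ * s * gx n m ∈ evenSubgroup n m := by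
  refine inv_mul_mul_mem_closure ?_ hs
  rintro _ (rfl | rfl | rfl)
  · rw [gx_inv_mul_gz_mul_gx]
    exact inv_mem (subset_closure (by simp))
  · rw [show (gx n m)⁻¹ * gx n m ^ 2 * gx n m = gx n m ^ 2 by group]
    exact subset_closure (by simp)
  · rw [show (gx n m)⁻¹ * (gx n m * gy n m) * gx n m = gy n m * gx n m by group, gy_mul_gx]
    exact mul_mem (subset_closure (by simp)) (subset_closure (by simp))

theorem mem_evenSubgroup_or_gx_inv_mul_mem (g : GG n m) :
    g ∈ evenSubgroup n m ∨ (gx n m)⁻¹ * g ∈ evenSubgroup n m := by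
  refine mem_or_inv_mul_mem_of_mem_closure gx_sq_mem_evenSubgroup
    (fun _ => gx_inv_mul_mul_gx_mem_evenSubgroup) ?_ (closure_gx_gy ▸ mem_top g)
  rintro _ (rfl | rfl)
  · exact .inr (by rw [inv_mul_cancel]; exact one_mem _)
  · refine .inr ?_
    rw [show (gx n m)⁻¹ * gy n m = (gx n m ^ 2)⁻¹ * (gx n m * gy n m) by rw [sq]; group]
    exact mul_mem (inv_mem gx_sq_mem_evenSubgroup) (subset_closure (by simp))

open DihedralGroup in
def toDihedral (hn : n ≠ 0) (hm : m ≠ 0) : GG n m →* DihedralGroup 8 :=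
  PresentedGroup.toGroup (f := ![sr 0, sr 1, r 6]) <| by
    have hsr (i : ZMod 8) {k : ℕ} (hk : k ≠ 0) : sr i ^ 2 ^ k = 1 :=
      orderOf_dvd_iff_pow_eq_one.mp (by rw [orderOf_sr]; exact dvd_pow_self 2 hk)
    simp only [grels, Set.mem_insert_iff, Set.mem_singleton_iff]
    rintro _ (rfl | rfl | rfl | rfl | rfl | rfl) <;>
      simp only [map_mul, map_inv, map_pow, FreeGroup.lift_apply_of]
    · decide
    · exact hsr 0 hn
    · exact hsr 1 hm
    all_goals decide

theorem gz_ne_inv (hn : n ≠ 0) (hm : m ≠ 0) : gz n m ≠ (gz n m)⁻¹ := by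
  intro h
  have h' := congrArg (toDihedral hn hm) h
  rw [map_inv, toDihedral, gz, PresentedGroup.toGroup.of] at h'
  exact absurd h' (by decide)

theorem centralizer_commutator_eq_evenSubgroup (hn : n ≠ 0) (hm : m ≠ 0) :
    centralizer (commutator (GG n m) : Set (GG n m)) = evenSubgroup n m := by
  rw [commutator_eq_zpowers_gz, zpowers_eq_closure, centralizer_closure]
  refine le_antisymm (fun g hg => ?_) evenSubgroup_le_centralizer_gz
  refine (mem_evenSubgroup_or_gx_inv_mul_mem g).resolve_right fun hs => gz_ne_inv hn hm ?_
  have hx : gx n m ∈ centralizer {gz n m} := by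
    simpa using mul_mem hg (inv_mem (evenSubgroup_le_centralizer_gz hs))
  rw [← gx_inv_mul_gz_mul_gx, mul_assoc, ← mem_centralizer_singleton_iff.mp hx, inv_mul_cancel_left]

end Presentation

/-- The centralizer `C_G(G')` of the derived subgroup `G'` in `G` equals
the subgroup generated by `z`, `x²` and `xy`, and this subgroup is abelian. -/
theorem statement_6 (n m : ℕ) (hm : 2 < m) (hmn : m < n) :
    Subgroup.centralizer (commutator (GG n m) : Set (GG n m)) =
      Subgroup.closure {gz n m, gx n m ^ 2, gx n m * gy n m} ∧
    IsMulCommutative (Subgroup.closure {gz n m, gx n m ^ 2, gx n m * gy n m}) :=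
  ⟨centralizer_commutator_eq_evenSubgroup (by omega) (by omega), isMulCommutative_evenSubgroup⟩

end MIP
end

section
/- In H, the element a² has order exactly 2^{n-1}, the element b has order at most 2^{n-1}, and the exponent of the centralizer C_H(H') is 2^{n-1}. -/
open Multiplicative SemidirectProduct
open scoped commutatorElement

theorem zmod_pow_eq_one_of_dvd {d e : ℕ} (x : Multiplicative (ZMod d)) (h : d ∣ e) :
    x ^ e = 1 :=
  Monoid.exponent_dvd_iff_forall_pow_eq_one.1
    (by rwa [Monoid.exponent_multiplicative, ZMod.exponent]) x

def zmodPowersHom {G : Type*} [Group G] (d : ℕ) (x : G) (hx : x ^ d = 1) :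
    Multiplicative (ZMod d) →* G :=
  AddMonoidHom.toMultiplicativeLeft <| ZMod.lift d
    ⟨zmultiplesHom (Additive G) (Additive.ofMul x), by simp [← ofMul_pow, hx]⟩

section zmodPowersHom
variable {G : Type*} [Group G] {d : ℕ} {x : G} (hx : x ^ d = 1)

theorem zmodPowersHom_ofAdd_intCast (k : ℤ) :
    zmodPowersHom d x hx (ofAdd (k : ZMod d)) = x ^ k := by
  simp [zmodPowersHom]

theorem zmodPowersHom_ofAdd_one : zmodPowersHom d x hx (ofAdd 1) = x := by
  simpa using zmodPowersHom_ofAdd_intCast hx 1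

theorem zmodPowersHom_mem_zpowers (g : Multiplicative (ZMod d)) :
    zmodPowersHom d x hx g ∈ Subgroup.zpowers x := by
  obtain ⟨k, hk⟩ := ZMod.intCast_surjective g.toAdd
  exact ⟨k, (zmodPowersHom_ofAdd_intCast hx k).symm.trans (by rw [hk, ofAdd_toAdd])⟩

end zmodPowersHom

namespace SemidirectProduct

theorem commute_inl_iff {N G : Type*} [CommGroup N] [Group G] {φ : G →* MulAut N} (n : N)
    (x : N ⋊[φ] G) : Commute (inl n) x ↔ φ x.right n = n := by
  rw [Commute, SemiconjBy, SemidirectProduct.ext_iff]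
  simp only [mul_left, mul_right, left_inl, right_inl, map_one, MulAut.one_apply, mul_one,
    one_mul, and_true]
  rw [mul_comm n, mul_right_inj, eq_comm]

theorem commute_inr_of_map_eq_one {N G : Type*} [Group N] [CommGroup G] {φ : G →* MulAut N}
    {g : G} (hg : φ g = 1) (x : N ⋊[φ] G) : Commute (inr g) x := by
  ext <;> simp [hg, mul_comm]

variable {N G H : Type*} [Group N] [Group G] [Group H] {φ : G →* MulAut N}

theorem pow_eq_mk_of_map_right_eq_one {x : N ⋊[φ] G} (hx : φ x.right = 1) (k : ℕ) :
    x ^ k = ⟨x.left ^ k, x.right ^ k⟩ := by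
  induction k with
  | zero => simp only [pow_zero]; rfl
  | succ k ih =>
    rw [pow_succ, ih]
    ext <;> simp only [mul_left, mul_right, map_pow, hx, one_pow, MulAut.one_apply, pow_succ]

theorem comp_map_pow_eq_conj_comp (fn : N →* H) (fg : G →* H) {g : G}
    (h : ∀ n, fn (φ g n) = fg g * fn n * (fg g)⁻¹) (k : ℕ) :
    fn.comp (φ (g ^ k)).toMonoidHom = (MulAut.conj (fg (g ^ k))).toMonoidHom.comp fn := by
  ext n
  induction k generalizing n with
  | zero => simp
  | succ k ih =>
    have := ih (φ g n)
    simp only [MonoidHom.comp_apply, MulEquiv.coe_toMonoidHom, MulAut.conj_apply] at this ⊢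
    rw [pow_succ, map_mul, MulAut.mul_apply, this, h, map_mul]
    group

end SemidirectProduct

namespace MIP

section Relations
variable (n m : ℕ)

theorem ha_pow : ha n m ^ 2 ^ n = 1 :=
  PresentedGroup.one_of_mem (by simp [hrels])

theorem hb_pow : hb n m ^ 2 ^ m = 1 :=
  PresentedGroup.one_of_mem (by simp [hrels])

theorem hc_pow : hc n m ^ 4 = 1 :=
  PresentedGroup.one_of_mem (by simp [hrels])

theorem hc_eq_commutatorElement : hc n m = ⁅(hb n m)⁻¹, (ha n m)⁻¹⁆ := by
  have h : (hc n m)⁻¹ * ((hb n m)⁻¹ * (ha n m)⁻¹ * hb n m * ha n m) = 1 :=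
    PresentedGroup.one_of_mem (Set.mem_insert _ _)
  rw [commutatorElement_def, inv_inv, inv_inv]
  exact inv_mul_eq_one.1 h

theorem hc_mem_commutator : hc n m ∈ commutator (HH n m) := by
  rw [hc_eq_commutatorElement]
  exact Subgroup.commutator_mem_commutator (Subgroup.mem_top _) (Subgroup.mem_top _)

theorem ha_mul_hc_mul_ha_inv : ha n m * hc n m * (ha n m)⁻¹ = (hc n m)⁻¹ := by
  have h : (ha n m)⁻¹ * hc n m * ha n m * hc n m = 1 :=
    PresentedGroup.one_of_mem (by simp [hrels])
  refine eq_inv_of_mul_eq_one_right ?_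
  calc hc n m * (ha n m * hc n m * (ha n m)⁻¹)
      = ha n m * ((ha n m)⁻¹ * hc n m * ha n m * hc n m) * (ha n m)⁻¹ := by group
    _ = 1 := by rw [h]; group

theorem ha_mul_hb_mul_ha_inv : ha n m * hb n m * (ha n m)⁻¹ = hb n m * hc n m := by
  conv_rhs =>
    rw [← inv_inv (hc n m), ← ha_mul_hc_mul_ha_inv, hc_eq_commutatorElement,
      commutatorElement_def]
  group

theorem hb_commute_hc : Commute (hb n m) (hc n m) := by
  have h : (hb n m)⁻¹ * hc n m * hb n m * (hc n m)⁻¹ = 1 :=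
    PresentedGroup.one_of_mem (by simp [hrels])
  refine Commute.symm ?_
  calc hc n m * hb n m = hb n m * ((hb n m)⁻¹ * hc n m * hb n m * (hc n m)⁻¹) * hc n m := by
        group
    _ = hb n m * hc n m := by rw [h, mul_one]

end Relations

abbrev ModelBase (M : ℕ) := Multiplicative (ZMod M) × Multiplicative (ZMod 4)

section Model
variable {M N : ℕ} (hM : 4 ∣ M) (hN : 2 ∣ N)

/-- Conjugation by `a`: `b ↦ b c` and `c ↦ c⁻¹`. -/
def twist : MulAut (ModelBase M) where
  toFun x := (x.1, ofAdd (ZMod.castHom hM (ZMod 4) x.1.toAdd) / x.2)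
  invFun x := (x.1, ofAdd (ZMod.castHom hM (ZMod 4) x.1.toAdd) / x.2)
  left_inv x := by simp
  right_inv x := by simp
  map_mul' x y := by
    ext
    · rfl
    · simp only [Prod.fst_mul, Prod.snd_mul, toAdd_mul, map_add, ofAdd_add]
      exact mul_div_mul_comm (α := Multiplicative (ZMod 4)) _ _ _ _

theorem twist_apply (x : ModelBase M) :
    twist hM x = (x.1, ofAdd (ZMod.castHom hM (ZMod 4) x.1.toAdd) / x.2) := rfl

theorem twist_mul_self : twist hM * twist hM = 1 := by
  ext x : 1
  simp [twist_apply]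

theorem twist_sq : twist hM ^ 2 = 1 := by
  rw [sq, twist_mul_self]

def parity : Multiplicative (ZMod N) →* Multiplicative (ZMod 2) :=
  (ZMod.castHom hN (ZMod 2)).toAddMonoidHom.toMultiplicative

def action : Multiplicative (ZMod N) →* MulAut (ModelBase M) :=
  (zmodPowersHom 2 (twist hM) (twist_sq hM)).comp (parity hN)

abbrev Model := ModelBase M ⋊[action hM hN] Multiplicative (ZMod N)

theorem parity_ofAdd_one : parity hN (ofAdd 1) = ofAdd 1 :=
  congrArg ofAdd (map_one (ZMod.castHom hN (ZMod 2)))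

theorem action_apply (g : Multiplicative (ZMod N)) :
    action hM hN g = zmodPowersHom 2 (twist hM) (twist_sq hM) (parity hN g) := rfl

theorem action_ofAdd_one : action hM hN (ofAdd 1) = twist hM := by
  rw [action_apply, parity_ofAdd_one, zmodPowersHom_ofAdd_one]

theorem action_eq_one_of_parity_eq_one {g : Multiplicative (ZMod N)} (hg : parity hN g = 1) :
    action hM hN g = 1 := by
  rw [action_apply, hg, map_one]

theorem action_eq_twist_of_parity_ne_one {g : Multiplicative (ZMod N)} (hg : parity hN g ≠ 1) :
    action hM hN g = twist hM := by
  have : parity hN g = ofAdd 1 := by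
    generalize parity hN g = t at hg
    revert t
    decide
  rw [action_apply, this, zmodPowersHom_ofAdd_one]

theorem pow_eq_one_of_parity_eq_one {g : Multiplicative (ZMod N)} (hg : parity hN g = 1) {e : ℕ}
    (he : N ∣ 2 * e) : g ^ e = 1 := by
  obtain ⟨k, hk⟩ := ZMod.intCast_surjective g.toAdd
  obtain ⟨l, rfl⟩ : (2 : ℤ) ∣ k := by
    have : ZMod.castHom hN (ZMod 2) g.toAdd = 0 := ofAdd_eq_one.1 hg
    rw [← hk, map_intCast] at this
    exact_mod_cast (ZMod.intCast_zmod_eq_zero_iff_dvd k 2).1 this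
  have : ((e * (2 * l) : ℤ) : ZMod N) = 0 :=
    (ZMod.intCast_zmod_eq_zero_iff_dvd _ N).2
      (dvd_trans (Int.natCast_dvd_natCast.2 he) ⟨l, by push_cast; ring⟩)
  rw [← ofAdd_toAdd g, ← hk, ← ofAdd_nsmul, nsmul_eq_mul, ofAdd_eq_one]
  exact_mod_cast this

def modelA : Model hM hN := inr (ofAdd 1)
def modelB : Model hM hN := inl (ofAdd 1, 1)
def modelC : Model hM hN := inl (1, ofAdd 1)

theorem modelA_inv_mul_inl_mul_modelA (x : ModelBase M) :
    (modelA hM hN)⁻¹ * inl x * modelA hM hN = inl (twist hM x) := by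
  have : (twist hM)⁻¹ = twist hM := inv_eq_of_mul_eq_one_right (twist_mul_self hM)
  rw [modelA, ← map_inv, ← inl_aut_inv, action_ofAdd_one, this]

theorem modelA_inv_mul_modelB_mul_modelA :
    (modelA hM hN)⁻¹ * modelB hM hN * modelA hM hN = modelB hM hN * modelC hM hN := by
  rw [modelB, modelA_inv_mul_inl_mul_modelA, modelC, ← map_mul]
  congr 1
  ext <;> simp [twist_apply, ZMod.cast_one hM]

theorem modelA_inv_mul_modelC_mul_modelA :
    (modelA hM hN)⁻¹ * modelC hM hN * modelA hM hN = (modelC hM hN)⁻¹ := by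
  rw [modelC, modelA_inv_mul_inl_mul_modelA, ← map_inv]
  congr 1
  ext <;> simp [twist_apply]

theorem modelB_commute_modelC : Commute (modelB hM hN) (modelC hM hN) :=
  (Commute.all _ _).map inl

theorem modelA_pow : modelA hM hN ^ N = 1 := by
  rw [modelA, ← map_pow, zmod_pow_eq_one_of_dvd _ dvd_rfl, map_one]

theorem modelB_pow : modelB hM hN ^ M = 1 := by
  rw [modelB, ← map_pow, Prod.pow_mk, zmod_pow_eq_one_of_dvd _ dvd_rfl, one_pow, Prod.mk_one_one,
    map_one]

theorem modelC_pow : modelC hM hN ^ 4 = 1 := by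
  rw [modelC, ← map_pow, Prod.pow_mk, zmod_pow_eq_one_of_dvd _ dvd_rfl, one_pow, Prod.mk_one_one,
    map_one]

theorem parity_right_eq_one_of_commute_modelC {x : Model hM hN}
    (h : Commute (modelC hM hN) x) : parity hN x.right = 1 := by
  rw [modelC, commute_inl_iff] at h
  by_contra hp
  rw [action_eq_twist_of_parity_ne_one hM hN hp, twist_apply] at h
  simp [Prod.ext_iff] at h
  exact absurd h (by decide)

theorem pow_eq_one_of_commute_modelC {x : Model hM hN} (h : Commute (modelC hM hN) x) {e : ℕ}
    (hMe : M ∣ e) (hNe : N ∣ 2 * e) : x ^ e = 1 := by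
  have hp := parity_right_eq_one_of_commute_modelC hM hN h
  rw [pow_eq_mk_of_map_right_eq_one (action_eq_one_of_parity_eq_one hM hN hp),
    pow_eq_one_of_parity_eq_one hN hp hNe, Prod.pow_def, zmod_pow_eq_one_of_dvd _ hMe,
    zmod_pow_eq_one_of_dvd _ (hM.trans hMe)]
  rfl

theorem commute_modelA_sq (x : Model hM hN) : Commute (modelA hM hN ^ 2) x := by
  rw [modelA, ← map_pow]
  exact commute_inr_of_map_eq_one (by rw [map_pow, action_ofAdd_one, twist_sq]) x

theorem orderOf_modelA_sq : orderOf (modelA hM hN ^ 2) = N / 2 := by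
  rw [modelA, ← map_pow, orderOf_injective _ inr_injective, ← ofAdd_nsmul,
    orderOf_ofAdd_eq_addOrderOf, nsmul_one, ZMod.addOrderOf_coe' N two_ne_zero,
    Nat.gcd_eq_right hN]

def modelGens : Fin 3 → Model hM hN := ![modelA hM hN, modelB hM hN, modelC hM hN]

end Model

section Embedding
variable (n m : ℕ) (hM : 4 ∣ 2 ^ m) (hN : 2 ∣ 2 ^ n)

theorem modelGens_rels : ∀ r ∈ hrels n m, FreeGroup.lift (modelGens hM hN) r = 1 := by
  intro r hr
  simp only [hrels, Set.mem_insert_iff, Set.mem_singleton_iff] at hr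
  rcases hr with rfl | rfl | rfl | rfl | rfl | rfl <;>
    simp only [modelGens, map_mul, map_inv, map_pow, FreeGroup.lift_apply_of,
      Matrix.cons_val_zero, Matrix.cons_val_one, Matrix.cons_val_two, Matrix.head_cons,
      Matrix.tail_cons]
  · have h := modelA_inv_mul_modelB_mul_modelA hM hN
    simp only [mul_assoc] at h ⊢
    rw [h]
    group
  · exact modelA_pow hM hN
  · exact modelB_pow hM hN
  · exact modelC_pow hM hN
  · rw [modelA_inv_mul_modelC_mul_modelA, inv_mul_cancel]
  · rw [mul_assoc _ (modelC hM hN), (modelB_commute_modelC hM hN).symm.eq]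
    group

def toModel : HH n m →* Model hM hN := PresentedGroup.toGroup (modelGens_rels n m hM hN)

theorem toModel_ha : toModel n m hM hN (ha n m) = modelA hM hN := PresentedGroup.toGroup.of _

theorem toModel_hc : toModel n m hM hN (hc n m) = modelC hM hN := PresentedGroup.toGroup.of _

def modelBaseToH : ModelBase (2 ^ m) →* HH n m :=
  (zmodPowersHom _ (hb n m) (hb_pow n m)).noncommCoprod (zmodPowersHom 4 (hc n m) (hc_pow n m))
    fun x y => by
      obtain ⟨i, hi⟩ := zmodPowersHom_mem_zpowers (hb_pow n m) x
      obtain ⟨j, hj⟩ := zmodPowersHom_mem_zpowers (hc_pow n m) y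
      rw [← hi, ← hj]
      exact (hb_commute_hc n m).zpow_zpow i j

theorem modelBaseToH_twist (x : ModelBase (2 ^ m)) :
    modelBaseToH n m (twist hM x) = ha n m * modelBaseToH n m x * (ha n m)⁻¹ := by
  obtain ⟨i, hi⟩ := ZMod.intCast_surjective x.1.toAdd
  obtain ⟨j, hj⟩ := ZMod.intCast_surjective x.2.toAdd
  obtain rfl : x = (ofAdd (i : ZMod (2 ^ m)), ofAdd (j : ZMod 4)) := by
    rw [hi, hj, ofAdd_toAdd, ofAdd_toAdd]
  rw [← MulAut.conj_apply]
  simp only [twist_apply, modelBaseToH, MonoidHom.noncommCoprod_apply, toAdd_ofAdd, map_intCast,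
    map_mul, map_div, zmodPowersHom_ofAdd_intCast, map_zpow, MulAut.conj_apply,
    ha_mul_hb_mul_ha_inv, ha_mul_hc_mul_ha_inv]
  rw [(hb_commute_hc n m).mul_zpow, inv_zpow, div_eq_mul_inv, mul_assoc]

def fromModel : Model hM hN →* HH n m :=
  SemidirectProduct.lift (modelBaseToH n m) (zmodPowersHom _ (ha n m) (ha_pow n m)) fun g => by
    obtain ⟨k, rfl⟩ : ∃ k : ℕ, g = ofAdd 1 ^ k :=
      ⟨g.toAdd.val, by rw [← ofAdd_nsmul, nsmul_one, ZMod.natCast_zmod_val, ofAdd_toAdd]⟩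
    refine comp_map_pow_eq_conj_comp _ _ (fun x => ?_) k
    rw [action_ofAdd_one, zmodPowersHom_ofAdd_one, modelBaseToH_twist]

theorem fromModel_comp_toModel : (fromModel n m hM hN).comp (toModel n m hM hN) = .id _ := by
  refine PresentedGroup.ext fun i => ?_
  fin_cases i <;>
    simp [toModel, fromModel, modelGens, modelA, modelB, modelC, modelBaseToH,
      zmodPowersHom_ofAdd_one, ha, hb, hc]

theorem toModel_injective : Function.Injective (toModel n m hM hN) :=
  Function.LeftInverse.injective (g := fromModel n m hM hN)
    (DFunLike.congr_fun (fromModel_comp_toModel n m hM hN))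

end Embedding

section Consequences
variable {n m : ℕ}

theorem orderOf_ha_sq (hm : 2 ≤ m) (hn : 1 ≤ n) : orderOf (ha n m ^ 2) = 2 ^ (n - 1) := by
  rw [← orderOf_injective _ (toModel_injective n m (Nat.pow_dvd_pow 2 hm) (Nat.pow_dvd_pow 2 hn)),
    map_pow, toModel_ha, orderOf_modelA_sq, ← Nat.pow_div hn two_pos, pow_one]

theorem commute_ha_sq (hm : 2 ≤ m) (hn : 1 ≤ n) (x : HH n m) : Commute (ha n m ^ 2) x :=
  Commute.of_map (toModel_injective n m (Nat.pow_dvd_pow 2 hm) (Nat.pow_dvd_pow 2 hn)) <| by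
    rw [map_pow, toModel_ha]
    exact commute_modelA_sq _ _ _

theorem pow_eq_one_of_commute_hc (hm : 2 ≤ m) (hmn : m < n) {x : HH n m}
    (h : Commute (hc n m) x) : x ^ 2 ^ (n - 1) = 1 := by
  have hM : 4 ∣ 2 ^ m := Nat.pow_dvd_pow 2 hm
  have hN : 2 ∣ 2 ^ n := dvd_pow_self 2 (by omega)
  apply toModel_injective n m hM hN
  rw [map_pow, map_one]
  refine pow_eq_one_of_commute_modelC hM hN (toModel_hc n m hM hN ▸ h.map _)
    (Nat.pow_dvd_pow 2 (by omega)) ?_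
  rw [← pow_succ', Nat.sub_add_cancel (by omega)]

end Consequences

/-- In `H`, the element `a²` has order exactly `2^(n-1)`, the element `b`
has order at most `2^(n-1)`, and the exponent of the centralizer `C_H(H')` is
`2^(n-1)`. -/
theorem statement_9 (n m : ℕ) (hm : 2 < m) (hmn : m < n) :
    orderOf (ha n m ^ 2) = 2 ^ (n - 1) ∧
    orderOf (hb n m) ≤ 2 ^ (n - 1) ∧
    Monoid.exponent (Subgroup.centralizer (commutator (HH n m) : Set (HH n m))) =
      2 ^ (n - 1) := by
  have ha2 := orderOf_ha_sq (n := n) hm.le (by omega)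
  refine ⟨ha2, ?_, Nat.dvd_antisymm ?_ ?_⟩
  · exact (Nat.le_of_dvd (by positivity) (orderOf_dvd_of_pow_eq_one (hb_pow n m))).trans
      (Nat.pow_le_pow_right two_pos (by omega))
  · exact Monoid.exponent_dvd_of_forall_pow_eq_one fun ⟨x, hx⟩ =>
      Subtype.ext (pow_eq_one_of_commute_hc hm.le hmn (hx _ (hc_mem_commutator n m)))
  · have hcen : ha n m ^ 2 ∈ Subgroup.centralizer (commutator (HH n m) : Set (HH n m)) :=
      fun g _ => (commute_ha_sq hm.le (by omega) g).symm.eq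
    rw [← ha2, ← Subgroup.orderOf_mk _ hcen]
    exact Monoid.order_dvd_exponent _

end MIP
end
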